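/- Let A₁ and A₂ be unital associative ℂ-algebras each of countable dimension over ℂ, let W₁ be an A₁-module, and let W₂ be a simple A₂-module. If W₁ ⊗_ℂ W₂ is a semisimple module over A₁ ⊗_ℂ A₂, then W₁ is a semisimple A₁-module. (Algebraic core of the converse direction of Theorem 6.3 of the paper: decomposing W₁ ⊗ W₂ = ⊕_i M_i into irreducibles, each M_i has the form W_{i1} ⊗ W₂ for an irreducible A₁-submodule W_{i1} of W₁, and W₁ ≅ ⊕_i W_{i1}, using the Jacobson density theorem in each factor.) -/

import Mathlib

/-!
Since `W₂` is simple and `A₂` has countable dimension, `End_{A₂} W₂ = ℂ` (Dixmier's lemma: a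
transcendental endomorphism `x` would give `𝔠` linearly independent elements `(x - a)⁻¹`). By
Jacobson density, `A₂` then acts on any finite set of vectors of `W₂` as an arbitrary `ℂ`-linear
map, so acting by some `1 ⊗ a₂` isolates a single coefficient of an element of `W₁ ⊗ W₂` with
respect to a basis of `W₂`. Hence every `A₁ ⊗ A₂`-submodule of `W₁ ⊗ W₂` is `U ⊗ W₂` for a unique
`A₁`-submodule `U` of `W₁`: the two submodule lattices are isomorphic, and complementedness
transfers from one to the other.
-/

open Cardinal TensorProduct

open scoped IsMulCommutative in
theorem Transcendental.linearIndependent_sub_inv_of_divisionRing {F D : Type*} [Field F]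
    [DivisionRing D] [Algebra F D] {x : D} (H : Transcendental F x) :
    LinearIndependent F fun a ↦ (x - algebraMap F D a)⁻¹ := by
  -- The bicommutant of `x` is a commutative domain containing every `(x - a)⁻¹`, so the field
  -- case applies in its fraction field.
  let S := Subalgebra.centralizer F (Subalgebra.centralizer F {x} : Set D)
  have hxS : x ∈ S := Set.subset_centralizer_centralizer rfl
  have : IsMulCommutative S := .of_setLike_mul_comm fun a ha b hb ↦
    Set.centralizer_centralizer_comm_of_comm (by simp) a ha b hb
  let y : S := ⟨x, hxS⟩
  let v (a : F) : S := ⟨(x - algebraMap F D a)⁻¹,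
    Set.inv_mem_centralizer₀ (S.sub_mem hxS (S.algebraMap_mem a))⟩
  let K := FractionRing S
  have hy : Transcendental F (algebraMap S K y) :=
    (transcendental_algebraMap_iff (IsFractionRing.injective S K)).2
      (Subalgebra.transcendental_iff_transcendental_val.2 H)
  have hv (a : F) : algebraMap S K (v a) = (algebraMap S K y - algebraMap F K a)⁻¹ := by
    have hne : x - algebraMap F D a ≠ 0 := fun h ↦
      H (sub_eq_zero.1 h ▸ isAlgebraic_algebraMap a)
    refine eq_inv_of_mul_eq_one_left ?_
    rw [IsScalarTower.algebraMap_apply F S K, ← map_sub, ← map_mul, ← map_one (algebraMap S K)]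
    exact congrArg _ (Subtype.ext (inv_mul_cancel₀ hne))
  have : LinearIndependent F v := by
    refine LinearIndependent.of_comp (IsScalarTower.toAlgHom F S K).toLinearMap ?_
    convert hy.linearIndependent_sub_inv using 1
    exact funext hv
  exact this.map' S.val.toLinearMap (LinearMap.ker_eq_bot.2 Subtype.val_injective)

theorem IsAlgClosed.algebraMap_surjective_of_rank_le_aleph0 {F D : Type*} [Field F]
    [IsAlgClosed F] [DivisionRing D] [Algebra F D] (hF : ℵ₀ < #F)
    (hD : Module.rank F D ≤ ℵ₀) : Function.Surjective (algebraMap F D) := by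
  have : Algebra.IsIntegral F D := ⟨fun x ↦ by
    by_contra hx
    have hcard := (Transcendental.linearIndependent_sub_inv_of_divisionRing
      (F := F) (x := x) fun h ↦ hx h.isIntegral).cardinal_lift_le_rank
    have : #F ≤ ℵ₀ := lift_le_aleph0.1 (hcard.trans (lift_le_aleph0.2 hD))
    exact this.not_gt hF⟩
  exact IsAlgClosed.algebraMap_bijective_of_isIntegral.2

theorem Module.End.algebraMap_surjective_of_rank_le_aleph0 {F A M : Type*} [Field F]
    [IsAlgClosed F] [Ring A] [Algebra F A] [AddCommGroup M] [Module F M] [Module A M]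
    [IsScalarTower F A M] [IsSimpleModule A M] (hF : ℵ₀ < #F) (hA : Module.rank F A ≤ ℵ₀) :
    Function.Surjective (algebraMap F (Module.End A M)) := by
  classical
  have := IsSimpleModule.nontrivial A M
  obtain ⟨m, hm⟩ := exists_ne (0 : M)
  have hM : Module.rank F M ≤ ℵ₀ := lift_le_aleph0.1 <|
    (((LinearMap.toSpanSingleton A M m).restrictScalars F).lift_rank_le_of_surjective
      (IsSimpleModule.toSpanSingleton_surjective A hm)).trans (lift_le_aleph0.2 hA)
  have heval : Function.Injective (LinearMap.applyₗ' F m : Module.End A M →ₗ[F] M) := by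
    refine (injective_iff_map_eq_zero _).2 fun f hf ↦ ?_
    exact (f.injective_or_eq_zero).resolve_left fun hinj ↦ hm (hinj (hf.trans f.map_zero.symm))
  have hEnd : Module.rank F (Module.End A M) ≤ ℵ₀ := lift_le_aleph0.1 <|
    ((LinearMap.applyₗ' F m).lift_rank_le_of_injective heval).trans (lift_le_aleph0.2 hM)
  exact IsAlgClosed.algebraMap_surjective_of_rank_le_aleph0 hF hEnd

theorem exists_smul_eq_of_algebraMap_end_surjective {K A M : Type*} [CommRing K] [Ring A]
    [Algebra K A] [AddCommGroup M] [Module K M] [Module A M] [IsScalarTower K A M]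
    [IsSemisimpleModule A M] (hM : Function.Surjective (algebraMap K (Module.End A M)))
    (g : M →ₗ[K] M) (s : Finset M) : ∃ a : A, ∀ m ∈ s, g m = a • m :=
  jacobson_density
    { toFun := g
      map_add' := g.map_add
      map_smul' := fun φ m ↦ by
        obtain ⟨c, rfl⟩ := hM φ
        exact g.map_smul c m }
    s

namespace TensorProduct

variable {K A₁ A₂ W₁ W₂ : Type*} [Field K] [Ring A₁] [Algebra K A₁] [Ring A₂] [Algebra K A₂]
  [AddCommGroup W₁] [Module K W₁] [Module A₁ W₁] [AddCommGroup W₂] [Module K W₂]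
  [Module (A₁ ⊗[K] A₂) (W₁ ⊗[K] W₂)]

variable (K A₂ W₂) in
def tensorTop (U : Submodule A₁ W₁) : Submodule (A₁ ⊗[K] A₂) (W₁ ⊗[K] W₂) :=
  Submodule.span _ {x | ∃ u ∈ U, ∃ w : W₂, u ⊗ₜ[K] w = x}

-- The largest `A₁`-submodule `U` with `U ⊗ W₂ ≤ M`; quantifying over `a` makes it `A₁`-stable
-- without reference to how `A₁ ⊗ A₂` acts.
def leftFactor (M : Submodule (A₁ ⊗[K] A₂) (W₁ ⊗[K] W₂)) : Submodule A₁ W₁ where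
  carrier := {v | ∀ (a : A₁) (w : W₂), (a • v) ⊗ₜ[K] w ∈ M}
  add_mem' hv hv' a w := by rw [smul_add, add_tmul]; exact M.add_mem (hv a w) (hv' a w)
  zero_mem' a w := by rw [smul_zero, zero_tmul]; exact M.zero_mem
  smul_mem' b v hv a w := by rw [smul_smul]; exact hv (a * b) w

theorem gc_tensorTop_leftFactor :
    GaloisConnection (tensorTop K A₂ W₂ : Submodule A₁ W₁ → Submodule (A₁ ⊗[K] A₂) _)
      leftFactor := fun U M ↦ by
  refine ⟨fun h u hu a w ↦ h (Submodule.subset_span ⟨a • u, U.smul_mem a hu, w, rfl⟩),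
    fun h ↦ Submodule.span_le.2 ?_⟩
  rintro _ ⟨u, hu, w, rfl⟩
  simpa using h hu 1 w

variable [Module A₂ W₂]

variable (K A₁ A₂ W₁ W₂) in
def IsFactorwiseAction : Prop :=
  ∀ (a₁ : A₁) (a₂ : A₂) (w₁ : W₁) (w₂ : W₂),
    (a₁ ⊗ₜ[K] a₂) • (w₁ ⊗ₜ[K] w₂) = (a₁ • w₁) ⊗ₜ[K] (a₂ • w₂)

variable [IsScalarTower K A₂ W₂]

theorem tensorTop_leftFactor (hsmul : IsFactorwiseAction K A₁ A₂ W₁ W₂)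
    [IsSemisimpleModule A₂ W₂] (hW₂ : Function.Surjective (algebraMap K (Module.End A₂ W₂)))
    (M : Submodule (A₁ ⊗[K] A₂) (W₁ ⊗[K] W₂)) : tensorTop K A₂ W₂ (leftFactor M) = M := by
  classical
  refine le_antisymm (gc_tensorTop_leftFactor.l_u_le M) (fun x hx ↦ ?_)
  let b := Module.Basis.ofVectorSpace K W₂
  let c := equivFinsuppOfBasisRight (M := W₁) b x
  have hx_eq : x = c.sum fun j v ↦ v ⊗ₜ[K] b j := by
    rw [← equivFinsuppOfBasisRight_symm_apply, LinearEquiv.symm_apply_apply]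
  have hc (j) : c j ∈ leftFactor M := fun a₁ w ↦ by
    obtain ⟨a₂, ha₂⟩ := exists_smul_eq_of_algebraMap_end_surjective hW₂
      (b.constr K (Pi.single j w)) (c.support.image b)
    -- `a₂` maps `b j` to `w` and the other basis vectors in the support of `c` to `0`.
    have hact : (a₁ ⊗ₜ[K] a₂) • x = (a₁ • c j) ⊗ₜ[K] w := calc
      _ = c.sum fun k v ↦ (a₁ • v) ⊗ₜ[K] (a₂ • b k) := by
        rw [hx_eq, Finsupp.smul_sum]; exact Finsupp.sum_congr fun k _ ↦ hsmul _ _ _ _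
      _ = c.sum fun k v ↦ (a₁ • v) ⊗ₜ[K] Pi.single j w k := Finsupp.sum_congr fun k hk ↦ by
        rw [← ha₂ (b k) (Finset.mem_image_of_mem b hk), b.constr_basis]
      _ = (a₁ • c j) ⊗ₜ[K] w := by
        rw [Finsupp.sum_eq_single j] <;> simp_all
    exact hact ▸ M.smul_mem _ hx
  rw [hx_eq]
  exact Submodule.finsuppSum_mem _ _ _ _ fun j _ ↦ Submodule.subset_span ⟨_, hc j, _, rfl⟩

variable [IsScalarTower K A₁ W₁]

theorem rid_lTensor_tmul_smul (hsmul : IsFactorwiseAction K A₁ A₂ W₁ W₂)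
    (φ : Module.Dual K W₂) (a₁ : A₁) (a₂ : A₂) (x : W₁ ⊗[K] W₂) :
    TensorProduct.rid K W₁ (φ.lTensor W₁ ((a₁ ⊗ₜ[K] a₂) • x)) =
      a₁ • TensorProduct.rid K W₁ ((φ ∘ₗ DistribSMul.toLinearMap K W₂ a₂).lTensor W₁ x) := by
  induction x using TensorProduct.induction_on with
  | zero => simp
  | tmul v w => rw [hsmul]; simp [smul_comm a₁]
  | add x y hx hy => simp only [smul_add, map_add, hx, hy]

theorem rid_lTensor_mem_of_mem_tensorTop (hsmul : IsFactorwiseAction K A₁ A₂ W₁ W₂)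
    {U : Submodule A₁ W₁} {x : W₁ ⊗[K] W₂} (hx : x ∈ tensorTop K A₂ W₂ U)
    (φ : Module.Dual K W₂) : TensorProduct.rid K W₁ (φ.lTensor W₁ x) ∈ U := by
  induction hx using Submodule.span_induction generalizing φ with
  | mem x hx =>
    obtain ⟨u, hu, w, rfl⟩ := hx
    simpa using U.smul_of_tower_mem (φ w) hu
  | zero => simp
  | add x y _ _ hx hy => simpa using U.add_mem (hx φ) (hy φ)
  | smul r x _ hx =>
    induction r using TensorProduct.induction_on generalizing φ with
    | zero => simp
    | tmul a₁ a₂ => rw [rid_lTensor_tmul_smul hsmul]; exact U.smul_mem a₁ (hx _)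
    | add r s hr hs => simpa [add_smul] using U.add_mem (hr φ) (hs φ)

theorem leftFactor_tensorTop (hsmul : IsFactorwiseAction K A₁ A₂ W₁ W₂) [Nontrivial W₂]
    (U : Submodule A₁ W₁) : leftFactor (tensorTop K A₂ W₂ U) = U := by
  refine le_antisymm (fun v hv ↦ ?_) (gc_tensorTop_leftFactor.le_u_l U)
  obtain ⟨w, hw⟩ := exists_ne (0 : W₂)
  obtain ⟨φ, hφ⟩ := Module.Projective.exists_dual_eq_one K hw
  have := rid_lTensor_mem_of_mem_tensorTop hsmul (by simpa using hv 1 w) φ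
  rwa [LinearMap.lTensor_tmul, rid_tmul, hφ, one_smul] at this

def tensorTopOrderIso (hsmul : IsFactorwiseAction K A₁ A₂ W₁ W₂) [IsSimpleModule A₂ W₂]
    (hW₂ : Function.Surjective (algebraMap K (Module.End A₂ W₂))) :
    Submodule A₁ W₁ ≃o Submodule (A₁ ⊗[K] A₂) (W₁ ⊗[K] W₂) :=
  have := IsSimpleModule.nontrivial A₂ W₂
  { toFun := tensorTop K A₂ W₂
    invFun := leftFactor
    left_inv := leftFactor_tensorTop hsmul
    right_inv := tensorTop_leftFactor hsmul hW₂
    map_rel_iff' {_ _} := by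
      rw [Equiv.coe_fn_mk, gc_tensorTop_leftFactor.le_iff_le, leftFactor_tensorTop hsmul] }

end TensorProduct

theorem isSemisimpleModule_left_of_tensorProduct_general {A₁ A₂ W₁ W₂ : Type*}
    [Ring A₁] [Algebra ℂ A₁] [Ring A₂] [Algebra ℂ A₂]
    [AddCommGroup W₁] [Module ℂ W₁] [Module A₁ W₁] [IsScalarTower ℂ A₁ W₁]
    [AddCommGroup W₂] [Module ℂ W₂] [Module A₂ W₂] [IsScalarTower ℂ A₂ W₂]
    (hA₂ : Module.rank ℂ A₂ ≤ ℵ₀)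
    (hW₂ : IsSimpleModule A₂ W₂)
    [Module (A₁ ⊗[ℂ] A₂) (W₁ ⊗[ℂ] W₂)]
    (hsmul : ∀ (a₁ : A₁) (a₂ : A₂) (w₁ : W₁) (w₂ : W₂),
      (a₁ ⊗ₜ[ℂ] a₂) • (w₁ ⊗ₜ[ℂ] w₂) = (a₁ • w₁) ⊗ₜ[ℂ] (a₂ • w₂))
    (hss : IsSemisimpleModule (A₁ ⊗[ℂ] A₂) (W₁ ⊗[ℂ] W₂)) :
    IsSemisimpleModule A₁ W₁ := by
  have hend : Function.Surjective (algebraMap ℂ (Module.End A₂ W₂)) :=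
    Module.End.algebraMap_surjective_of_rank_le_aleph0
      (mk_complex ▸ aleph0_lt_continuum) hA₂
  rw [isSemisimpleModule_iff] at hss ⊢
  exact (tensorTopOrderIso hsmul hend).complementedLattice_iff.2 hss

/-- Algebraic core of the converse direction of Theorem 6.3: for unital associative
ℂ-algebras `A₁`, `A₂` of countable ℂ-dimension, if `W₂` is a simple `A₂`-module and
`W₁ ⊗[ℂ] W₂` is a semisimple `A₁ ⊗[ℂ] A₂`-module (for the componentwise action),
then `W₁` is a semisimple `A₁`-module. -/
theorem isSemisimpleModule_left_of_tensorProduct {A₁ A₂ W₁ W₂ : Type*}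
    [Ring A₁] [Algebra ℂ A₁] [Ring A₂] [Algebra ℂ A₂]
    [AddCommGroup W₁] [Module ℂ W₁] [Module A₁ W₁] [IsScalarTower ℂ A₁ W₁]
    [AddCommGroup W₂] [Module ℂ W₂] [Module A₂ W₂] [IsScalarTower ℂ A₂ W₂]
    (hA₁ : Module.rank ℂ A₁ ≤ ℵ₀) (hA₂ : Module.rank ℂ A₂ ≤ ℵ₀)
    (hW₂ : IsSimpleModule A₂ W₂)
    [Module (A₁ ⊗[ℂ] A₂) (W₁ ⊗[ℂ] W₂)]
    (hsmul : ∀ (a₁ : A₁) (a₂ : A₂) (w₁ : W₁) (w₂ : W₂),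
      (a₁ ⊗ₜ[ℂ] a₂) • (w₁ ⊗ₜ[ℂ] w₂) = (a₁ • w₁) ⊗ₜ[ℂ] (a₂ • w₂))
    (hss : IsSemisimpleModule (A₁ ⊗[ℂ] A₂) (W₁ ⊗[ℂ] W₂)) :
    IsSemisimpleModule A₁ W₁ :=
  isSemisimpleModule_left_of_tensorProduct_general hA₂ hW₂ hsmul hss
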